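/- arXiv:1811.11056 — 2 statements merged into one kernel-verified Lean document; each statement's English description precedes it below -/
import Mathlib

section
/- For every t ∈ ℝ, the third Frenet curvature of x satisfies κ₃(t) = α₁α₂ / √(a₁²α₁⁴ + a₂²α₂⁴). -/
open Real intervalIntegral

/-- The curve `x(t) = (a₁ cos(α₁ t), a₁ sin(α₁ t), a₂ cos(α₂ t), a₂ sin(α₂ t))` in `ℝ⁴`. -/
noncomputable def curveX (a₁ a₂ α₁ α₂ : ℝ) : ℝ → EuclideanSpace ℝ (Fin 4) :=
  fun t => (WithLp.equiv 2 (Fin 4 → ℝ)).symm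
    ![a₁ * Real.cos (α₁ * t), a₁ * Real.sin (α₁ * t),
      a₂ * Real.cos (α₂ * t), a₂ * Real.sin (α₂ * t)]

/-- `D_j(t)`: the determinant of the `j × j` Gram matrix whose `(a,b)` entry is the inner
product of the `a`-th and `b`-th derivatives of `y` at `t` (`1 ≤ a, b ≤ j`); `D₀ = 1`. -/
noncomputable def gramDet {n : ℕ} (y : ℝ → EuclideanSpace ℝ (Fin n)) (j : ℕ) (t : ℝ) : ℝ :=
  Matrix.det (Matrix.of fun a b : Fin j =>
    (inner ℝ (iteratedDeriv (a.val + 1) y t) (iteratedDeriv (b.val + 1) y t) : ℝ))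

/-- The `j`-th Frenet curvature `κ_j(t) = √(D_{j+1} D_{j-1}) / (D_j ‖y′(t)‖)` (for `j ≥ 1`). -/
noncomputable def frenetCurvature {n : ℕ} (y : ℝ → EuclideanSpace ℝ (Fin n)) (j : ℕ) (t : ℝ) :
    ℝ :=
  Real.sqrt (gramDet y (j + 1) t * gramDet y (j - 1) t) / (gramDet y j t * ‖deriv y t‖)

/-- The Plücker coordinates `w(t)` of the exterior product of `x′(t)` and `x″(t)`. -/
noncomputable def oscW (x : ℝ → EuclideanSpace ℝ (Fin 4)) (t : ℝ) : EuclideanSpace ℝ (Fin 6) :=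
  (WithLp.equiv 2 (Fin 6 → ℝ)).symm
    ![deriv x t 0 * deriv (deriv x) t 1 - deriv x t 1 * deriv (deriv x) t 0,
      deriv x t 0 * deriv (deriv x) t 2 - deriv x t 2 * deriv (deriv x) t 0,
      deriv x t 0 * deriv (deriv x) t 3 - deriv x t 3 * deriv (deriv x) t 0,
      deriv x t 1 * deriv (deriv x) t 2 - deriv x t 2 * deriv (deriv x) t 1,
      deriv x t 1 * deriv (deriv x) t 3 - deriv x t 3 * deriv (deriv x) t 1,
      deriv x t 2 * deriv (deriv x) t 3 - deriv x t 3 * deriv (deriv x) t 2]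

/-- The osculating indicatrix `x̃(t) = w(t) / ‖w(t)‖`. -/
noncomputable def oscInd (x : ℝ → EuclideanSpace ℝ (Fin 4)) (t : ℝ) :
    EuclideanSpace ℝ (Fin 6) :=
  ‖oscW x t‖⁻¹ • oscW x t

/-!
Each derivative turns the two circle components through the phase `π / 2` and scales them by
`α₁` and `α₂`, so `⟪x⁽ʲ⁾(t), x⁽ᵏ⁾(t)⟫ = cos ((j - k) π / 2) · mⱼ₊ₖ` with `mₙ = a₁² α₁ⁿ + a₂² α₂ⁿ`,
independently of `t`. The Gram matrices are therefore checkerboard: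
`D₂ = m₂ m₄`, `D₃ = m₄ Δ₂` and `D₄ = Δ₂ Δ₄`, where by Lagrange's identity
`Δₙ = mₙ mₙ₊₄ - mₙ₊₂² = a₁² a₂² α₁ⁿ α₂ⁿ (α₁² - α₂²)²`. Hence `Δ₄ = α₁² α₂² Δ₂`, and
`κ₃ = √(D₄ D₂) / (D₃ √m₂)` collapses to `α₁ α₂ / √m₄`.
-/

lemma hasDerivAt_toLp {ι : Type*} [Fintype ι] (p : ENNReal) [Fact (1 ≤ p)] {f : ℝ → ι → ℝ}
    {f' : ι → ℝ} {t : ℝ} (h : HasDerivAt f f' t) :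
    HasDerivAt (fun s => WithLp.toLp p (f s)) (WithLp.toLp p f') t :=
  (PiLp.hasFDerivAt_toLp p (f t)).comp_hasDerivAt t h

lemma hasDerivAt_mul_add (α φ t : ℝ) : HasDerivAt (fun s => α * s + φ) α t := by
  simpa using ((hasDerivAt_id t).const_mul α).add_const φ

lemma hasDerivAt_mul_cos_mul_add {c α φ c' φ' : ℝ} (t : ℝ) (hc : c' = c * α)
    (hφ : φ' = φ + π / 2) :
    HasDerivAt (fun s => c * cos (α * s + φ)) (c' * cos (α * t + φ')) t := by
  refine ((hasDerivAt_mul_add α φ t).cos.const_mul c).congr_deriv ?_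
  rw [hc, hφ, ← add_assoc, cos_add_pi_div_two]
  ring

lemma hasDerivAt_mul_sin_mul_add {c α φ c' φ' : ℝ} (t : ℝ) (hc : c' = c * α)
    (hφ : φ' = φ + π / 2) :
    HasDerivAt (fun s => c * sin (α * s + φ)) (c' * sin (α * t + φ')) t := by
  refine ((hasDerivAt_mul_add α φ t).sin.const_mul c).congr_deriv ?_
  rw [hc, hφ, ← add_assoc, sin_add_pi_div_two]
  ring

lemma cos_two_mul_pi_div_two : cos (2 * (π / 2)) = -1 := by
  rw [mul_div_cancel₀ _ two_ne_zero, cos_pi]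

lemma cos_three_mul_pi_div_two : cos (3 * (π / 2)) = 0 := by
  rw [show (3 : ℝ) * (π / 2) = π / 2 + π by ring, cos_add_pi, cos_pi_div_two, neg_zero]

lemma Matrix.det_checkerboard_fin_four {R : Type*} [CommRing R] (p q r s u v : R) :
    Matrix.det !![p, 0, q, 0; 0, r, 0, s; q, 0, u, 0; 0, s, 0, v]
      = (p * u - q ^ 2) * (r * v - s ^ 2) := by
  simp [Matrix.det_succ_row_zero, Fin.sum_univ_succ, Fin.succAbove]
  ring

section Curve

variable (a₁ a₂ α₁ α₂ : ℝ)

def curveMoment (n : ℕ) : ℝ := a₁ ^ 2 * α₁ ^ n + a₂ ^ 2 * α₂ ^ n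

local notation "m" => curveMoment a₁ a₂ α₁ α₂

lemma curveMoment_mul_sub_sq (n : ℕ) :
    m n * m (n + 4) - m (n + 2) ^ 2
      = a₁ ^ 2 * a₂ ^ 2 * α₁ ^ n * α₂ ^ n * (α₁ ^ 2 - α₂ ^ 2) ^ 2 := by
  simp only [curveMoment]
  ring

lemma iteratedDeriv_curveX (k : ℕ) :
    iteratedDeriv k (curveX a₁ a₂ α₁ α₂) = fun t => WithLp.toLp 2
      ![a₁ * α₁ ^ k * cos (α₁ * t + k * (π / 2)), a₁ * α₁ ^ k * sin (α₁ * t + k * (π / 2)),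
        a₂ * α₂ ^ k * cos (α₂ * t + k * (π / 2)), a₂ * α₂ ^ k * sin (α₂ * t + k * (π / 2))] := by
  induction k with
  | zero => funext t; simp [curveX]
  | succ k ih =>
    have hphase : ((k + 1 : ℕ) : ℝ) * (π / 2) = k * (π / 2) + π / 2 := by push_cast; ring
    have hc (a α : ℝ) : a * α ^ (k + 1) = a * α ^ k * α := by ring
    rw [iteratedDeriv_succ, ih]
    funext t
    refine (hasDerivAt_toLp 2 (hasDerivAt_pi.2 fun i => ?_)).deriv
    fin_cases i
    · exact hasDerivAt_mul_cos_mul_add t (hc _ _) hphase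
    · exact hasDerivAt_mul_sin_mul_add t (hc _ _) hphase
    · exact hasDerivAt_mul_cos_mul_add t (hc _ _) hphase
    · exact hasDerivAt_mul_sin_mul_add t (hc _ _) hphase

lemma inner_iteratedDeriv_curveX (j k : ℕ) (t : ℝ) :
    inner ℝ (iteratedDeriv j (curveX a₁ a₂ α₁ α₂) t) (iteratedDeriv k (curveX a₁ a₂ α₁ α₂) t)
      = cos (((j : ℝ) - k) * (π / 2)) * m (j + k) := by
  have hcos (α : ℝ) : cos (((j : ℝ) - k) * (π / 2))
      = cos (α * t + j * (π / 2)) * cos (α * t + k * (π / 2))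
        + sin (α * t + j * (π / 2)) * sin (α * t + k * (π / 2)) := by
    rw [← cos_sub]; ring_nf
  simp only [iteratedDeriv_curveX, PiLp.inner_apply, Fin.sum_univ_four, curveMoment,
    Matrix.cons_val, RCLike.inner_apply, conj_trivial]
  linear_combination (-(a₁ ^ 2 * α₁ ^ (j + k))) * hcos α₁ - a₂ ^ 2 * α₂ ^ (j + k) * hcos α₂

lemma norm_deriv_curveX (t : ℝ) : ‖deriv (curveX a₁ a₂ α₁ α₂) t‖ = √(m 2) := by
  rw [← iteratedDeriv_one, norm_eq_sqrt_real_inner, inner_iteratedDeriv_curveX]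
  norm_num

lemma gramDet_curveX (j : ℕ) (t : ℝ) :
    gramDet (curveX a₁ a₂ α₁ α₂) j t
      = Matrix.det (Matrix.of fun a b : Fin j =>
          cos (((a : ℝ) - b) * (π / 2)) * m (a + b + 2)) := by
  unfold gramDet
  congr with a b
  rw [inner_iteratedDeriv_curveX]
  push_cast
  ring_nf

lemma gramDet_curveX_two (t : ℝ) : gramDet (curveX a₁ a₂ α₁ α₂) 2 t = m 2 * m 4 := by
  rw [gramDet_curveX, Matrix.det_fin_two]
  norm_num

lemma gramDet_curveX_three (t : ℝ) :
    gramDet (curveX a₁ a₂ α₁ α₂) 3 t = m 4 * (m 2 * m 6 - m 4 ^ 2) := by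
  rw [gramDet_curveX, Matrix.det_fin_three]
  norm_num [cos_two_mul_pi_div_two]
  ring

lemma gramDet_curveX_four (t : ℝ) :
    gramDet (curveX a₁ a₂ α₁ α₂) 4 t = (m 2 * m 6 - m 4 ^ 2) * (m 4 * m 8 - m 6 ^ 2) := by
  have hgram : (Matrix.of fun a b : Fin 4 => cos (((a : ℝ) - b) * (π / 2)) * m (a + b + 2))
      = !![m 2, 0, -m 4, 0; 0, m 4, 0, -m 6; -m 4, 0, m 6, 0; 0, -m 6, 0, m 8] := by
    ext i j
    fin_cases i <;> fin_cases j <;> norm_num [cos_two_mul_pi_div_two, cos_three_mul_pi_div_two]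
  rw [gramDet_curveX, hgram, Matrix.det_checkerboard_fin_four]
  ring

end Curve

lemma sqrt_mul_div_eq {D m₂ m₄ c : ℝ} (hD : 0 < D) (hm₂ : 0 < m₂) (hm₄ : 0 < m₄) (hc : 0 ≤ c) :
    √(D * (c ^ 2 * D) * (m₂ * m₄)) / (m₄ * D * √m₂) = c / √m₄ := by
  have hsplit : D * (c ^ 2 * D) * (m₂ * m₄) = (D * c) ^ 2 * m₂ * m₄ := by ring
  rw [hsplit, sqrt_mul (by positivity), sqrt_mul (by positivity), sqrt_sq (by positivity)]
  have hm₄' : √m₄ ^ 2 = m₄ := sq_sqrt hm₄.le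
  have hs₂ : 0 < √m₂ := sqrt_pos.2 hm₂
  have hs₄ : 0 < √m₄ := sqrt_pos.2 hm₄
  field_simp
  rw [hm₄']

theorem stmt5 (a₁ a₂ α₁ α₂ : ℝ) (ha₁ : 0 < a₁) (ha₂ : 0 < a₂)
    (hα₁ : 0 < α₁) (hα₂ : 0 < α₂) (hne : α₁ ≠ α₂) :
    ∀ t : ℝ, frenetCurvature (curveX a₁ a₂ α₁ α₂) 3 t
      = α₁ * α₂ / Real.sqrt (a₁ ^ 2 * α₁ ^ 4 + a₂ ^ 2 * α₂ ^ 4) := by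
  intro t
  set m := curveMoment a₁ a₂ α₁ α₂
  have hm (n : ℕ) : 0 < m n := by simp only [m, curveMoment]; positivity
  have hsq : α₁ ^ 2 - α₂ ^ 2 ≠ 0 :=
    sub_ne_zero.2 fun h => hne ((pow_left_inj₀ hα₁.le hα₂.le two_ne_zero).1 h)
  have hΔ₂ := curveMoment_mul_sub_sq a₁ a₂ α₁ α₂ 2
  have hΔ₄ := curveMoment_mul_sub_sq a₁ a₂ α₁ α₂ 4
  have hΔ₂_pos : 0 < m 2 * m 6 - m 4 ^ 2 := by rw [hΔ₂]; positivity
  have hΔ₄_eq : m 4 * m 8 - m 6 ^ 2 = (α₁ * α₂) ^ 2 * (m 2 * m 6 - m 4 ^ 2) := by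
    rw [hΔ₂, hΔ₄]; ring
  rw [frenetCurvature, Nat.add_one_sub_one, gramDet_curveX_four, gramDet_curveX_two,
    gramDet_curveX_three, norm_deriv_curveX, hΔ₄_eq,
    sqrt_mul_div_eq hΔ₂_pos (hm 2) (hm 4) (by positivity)]
  rfl
end

section
/- For every t ∈ ℝ, the first Frenet curvature of the osculating indicatrix x̃ (as a curve in ℝ⁶) satisfies κ̃₁(t) = λ·√(α₁² + α₂²) / (a₁a₂α₁α₂·|α₁² − α₂²|); in particular κ̃₁ is constant. -/
open Real intervalIntegral

/-!
Write `x⁽ⁿ⁾` for the derivatives of `x` and `u ∧ v` for the Plücker vector of `u, v ∈ ℝ⁴`, so that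
`w = x′ ∧ x″`. Since `x⁽ⁿ⁾` is `x` with amplitudes `aᵢαᵢⁿ` and phases shifted by `nπ/2`,
`⟪x⁽ᵐ⁾, x⁽ⁿ⁾⟫ = (a₁²α₁^(m+n) + a₂²α₂^(m+n)) cos((m - n)π/2)`. The Binet–Cauchy identity
`⟪u ∧ v, u' ∧ v'⟫ = ⟪u, u'⟫⟪v, v'⟫ - ⟪u, v'⟫⟪u', v⟫` then shows that `‖w‖ = λ` is constant, so
`x̃ = λ⁻¹ w`, and, with `w′ = x′ ∧ x‴` and `w″ = x″ ∧ x‴ + x′ ∧ x⁗`, that `w′ ⊥ w″`,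
`‖w′‖ = |K|` and `‖w″‖ = |K| √(α₁² + α₂²)` for `K = a₁a₂α₁α₂(α₁² - α₂²)`. For a curve with
`y′ ⊥ y″` the first curvature is `‖y″‖ / ‖y′‖²`, and rescaling the curve by `λ⁻¹` multiplies it
by `λ`.
-/

open scoped RealInnerProductSpace

theorem hasDerivAt_euclideanSpace_iff {n : ℕ} {f : ℝ → EuclideanSpace ℝ (Fin n)}
    {f' : EuclideanSpace ℝ (Fin n)} {t : ℝ} :
    HasDerivAt f f' t ↔ ∀ i, HasDerivAt (fun s => f s i) (f' i) t :=
  ⟨fun h i => (EuclideanSpace.proj (𝕜 := ℝ) i).hasFDerivAt.comp_hasDerivAt t h,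
    fun h => (PiLp.continuousLinearEquiv 2 ℝ fun _ : Fin n => ℝ).symm.toContinuousLinearMap
      |>.hasFDerivAt.comp_hasDerivAt t (hasDerivAt_pi.2 h)⟩

section Frenet

variable {n : ℕ} (y : ℝ → EuclideanSpace ℝ (Fin n)) (t : ℝ)

theorem gramDet_zero : gramDet y 0 t = 1 := Matrix.det_fin_zero

theorem gramDet_one : gramDet y 1 t = ‖deriv y t‖ ^ 2 := by
  rw [gramDet, Matrix.det_fin_one, Matrix.of_apply, Fin.val_zero, zero_add, iteratedDeriv_one,
    real_inner_self_eq_norm_sq]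

theorem gramDet_two :
    gramDet y 2 t =
      ‖deriv y t‖ ^ 2 * ‖deriv (deriv y) t‖ ^ 2 - ⟪deriv y t, deriv (deriv y) t⟫ ^ 2 := by
  have h2 : iteratedDeriv 2 y = deriv (deriv y) := by
    rw [iteratedDeriv_succ, iteratedDeriv_one]
  simp only [gramDet, Matrix.det_fin_two, Matrix.of_apply, Fin.val_zero, Fin.val_one, zero_add,
    iteratedDeriv_one, h2, real_inner_self_eq_norm_sq, real_inner_comm (deriv y t)]
  ring

theorem frenetCurvature_one_eq :
    frenetCurvature y 1 t =
      √(‖deriv y t‖ ^ 2 * ‖deriv (deriv y) t‖ ^ 2 - ⟪deriv y t, deriv (deriv y) t⟫ ^ 2) /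
        ‖deriv y t‖ ^ 3 := by
  rw [frenetCurvature, gramDet_two, Nat.sub_self, gramDet_zero, gramDet_one, mul_one]
  ring

theorem frenetCurvature_one_of_inner_eq_zero (h : ⟪deriv y t, deriv (deriv y) t⟫ = 0) :
    frenetCurvature y 1 t = ‖deriv (deriv y) t‖ / ‖deriv y t‖ ^ 2 := by
  rw [frenetCurvature_one_eq, h, ← mul_pow, zero_pow two_ne_zero, sub_zero,
    Real.sqrt_sq (by positivity)]
  rcases eq_or_ne ‖deriv y t‖ 0 with h0 | h0
  · simp [h0]
  · field_simp

theorem frenetCurvature_one_const_smul (c : ℝ) :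
    frenetCurvature (c • y) 1 t = |c|⁻¹ * frenetCurvature y 1 t := by
  have h1 : deriv (c • y) = c • deriv y := funext fun s => deriv_const_smul_field c y
  have h2 : deriv (c • deriv y) = c • deriv (deriv y) :=
    funext fun s => deriv_const_smul_field c (deriv y)
  simp only [frenetCurvature_one_eq, h1, h2, Pi.smul_apply, norm_smul, real_inner_smul_left,
    real_inner_smul_right, Real.norm_eq_abs]
  set a := ‖deriv y t‖
  set b := ‖deriv (deriv y) t‖
  set p := ⟪deriv y t, deriv (deriv y) t⟫
  have hscale : (|c| * a) ^ 2 * (|c| * b) ^ 2 - (c * (c * p)) ^ 2 =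
      (|c| ^ 2) ^ 2 * (a ^ 2 * b ^ 2 - p ^ 2) := by
    simp only [mul_pow, sq_abs]
    ring
  rw [hscale, Real.sqrt_mul (by positivity), Real.sqrt_sq (by positivity)]
  rcases eq_or_ne c 0 with rfl | hc
  · simp
  · field_simp

end Frenet

def wedge (u v : EuclideanSpace ℝ (Fin 4)) : EuclideanSpace ℝ (Fin 6) :=
  WithLp.toLp 2 fun k =>
    u (![0, 0, 0, 1, 1, 2] k) * v (![1, 2, 3, 2, 3, 3] k) -
      u (![1, 2, 3, 2, 3, 3] k) * v (![0, 0, 0, 1, 1, 2] k)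

theorem oscW_eq_wedge (x : ℝ → EuclideanSpace ℝ (Fin 4)) (t : ℝ) :
    oscW x t = wedge (deriv x t) (deriv (deriv x) t) := by
  ext k
  fin_cases k <;> rfl

theorem wedge_self (u : EuclideanSpace ℝ (Fin 4)) : wedge u u = 0 := by
  ext k
  simp only [wedge, mul_comm, sub_self, PiLp.zero_apply]

theorem inner_wedge_wedge (u v u' v' : EuclideanSpace ℝ (Fin 4)) :
    ⟪wedge u v, wedge u' v'⟫ = ⟪u, u'⟫ * ⟪v, v'⟫ - ⟪u, v'⟫ * ⟪u', v⟫ := by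
  simp only [wedge, PiLp.inner_apply, RCLike.inner_apply, conj_trivial, Fin.sum_univ_succ,
    Fin.isValue, Matrix.cons_val_zero, Matrix.cons_val_succ, Finset.univ_unique,
    Fin.default_eq_zero, Matrix.cons_val_fin_one, Finset.sum_const, Finset.card_singleton,
    one_smul, Fin.succ_zero_eq_one, Fin.succ_one_eq_two, Finset.sum_singleton, Fin.reduceSucc]
  ring

theorem HasDerivAt.wedge {f g : ℝ → EuclideanSpace ℝ (Fin 4)} {f' g' : EuclideanSpace ℝ (Fin 4)}
    {t : ℝ} (hf : HasDerivAt f f' t) (hg : HasDerivAt g g' t) :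
    HasDerivAt (fun s => wedge (f s) (g s)) (wedge f' (g t) + wedge (f t) g') t := by
  rw [hasDerivAt_euclideanSpace_iff] at hf hg ⊢
  intro k
  refine (((hf _).mul (hg _)).sub ((hf _).mul (hg _))).congr_deriv ?_
  simp only [_root_.wedge, PiLp.add_apply]
  ring

section TorusCurve

variable (a₁ a₂ α₁ α₂ : ℝ)

noncomputable def torusCurve (φ s : ℝ) : EuclideanSpace ℝ (Fin 4) :=
  !₂[a₁ * cos (α₁ * s + φ), a₁ * sin (α₁ * s + φ), a₂ * cos (α₂ * s + φ), a₂ * sin (α₂ * s + φ)]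

theorem hasDerivAt_torusCurve (φ s : ℝ) :
    HasDerivAt (torusCurve a₁ a₂ α₁ α₂ φ)
      (torusCurve (a₁ * α₁) (a₂ * α₂) α₁ α₂ (φ + π / 2) s) s := by
  have hphase (α : ℝ) : HasDerivAt (fun s => α * s + φ) α s := by
    simpa using ((hasDerivAt_id s).const_mul α).add_const φ
  rw [hasDerivAt_euclideanSpace_iff]
  intro i
  fin_cases i <;> simp only [torusCurve, ← add_assoc, cos_add_pi_div_two, sin_add_pi_div_two,
    Fin.zero_eta, Fin.mk_one, Fin.reduceFinMk, Fin.isValue, Matrix.cons_val_zero,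
    Matrix.cons_val_one, Matrix.cons_val, mul_neg]
  · exact ((hphase α₁).cos.const_mul a₁).congr_deriv (by ring)
  · exact ((hphase α₁).sin.const_mul a₁).congr_deriv (by ring)
  · exact ((hphase α₂).cos.const_mul a₂).congr_deriv (by ring)
  · exact ((hphase α₂).sin.const_mul a₂).congr_deriv (by ring)

theorem inner_torusCurve (b₁ b₂ φ ψ s : ℝ) :
    ⟪torusCurve a₁ a₂ α₁ α₂ φ s, torusCurve b₁ b₂ α₁ α₂ ψ s⟫ =
      (a₁ * b₁ + a₂ * b₂) * cos (φ - ψ) := by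
  have hcos (α : ℝ) :
      cos (φ - ψ) = cos (α * s + φ) * cos (α * s + ψ) + sin (α * s + φ) * sin (α * s + ψ) := by
    rw [← cos_sub]
    congr 1
    ring
  simp only [torusCurve, PiLp.inner_apply, RCLike.inner_apply, conj_trivial, Fin.sum_univ_succ,
    Fin.isValue, Matrix.cons_val_zero, Matrix.cons_val_succ, Finset.univ_unique,
    Fin.default_eq_zero, Matrix.cons_val_fin_one, Finset.sum_const, Finset.card_singleton,
    one_smul]
  linear_combination (-(a₁ * b₁)) * hcos α₁ - (a₂ * b₂) * hcos α₂

noncomputable def curveXDeriv (n : ℕ) : ℝ → EuclideanSpace ℝ (Fin 4) :=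
  torusCurve (a₁ * α₁ ^ n) (a₂ * α₂ ^ n) α₁ α₂ (n * (π / 2))

theorem curveX_eq_curveXDeriv_zero : curveX a₁ a₂ α₁ α₂ = curveXDeriv a₁ a₂ α₁ α₂ 0 := by
  ext s i
  fin_cases i <;> simp [curveX, curveXDeriv, torusCurve]

theorem hasDerivAt_curveXDeriv (n : ℕ) (s : ℝ) :
    HasDerivAt (curveXDeriv a₁ a₂ α₁ α₂ n) (curveXDeriv a₁ a₂ α₁ α₂ (n + 1) s) s := by
  refine (hasDerivAt_torusCurve _ _ α₁ α₂ _ s).congr_deriv ?_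
  unfold curveXDeriv
  congr 1 <;> push_cast <;> ring

theorem deriv_curveXDeriv (n : ℕ) :
    deriv (curveXDeriv a₁ a₂ α₁ α₂ n) = curveXDeriv a₁ a₂ α₁ α₂ (n + 1) :=
  funext fun s => (hasDerivAt_curveXDeriv a₁ a₂ α₁ α₂ n s).deriv

theorem inner_curveXDeriv_add (n k : ℕ) (s : ℝ) :
    ⟪curveXDeriv a₁ a₂ α₁ α₂ n s, curveXDeriv a₁ a₂ α₁ α₂ (n + k) s⟫ =
      (a₁ ^ 2 * α₁ ^ (2 * n + k) + a₂ ^ 2 * α₂ ^ (2 * n + k)) * cos (k * (π / 2)) := by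
  rw [curveXDeriv, curveXDeriv, inner_torusCurve, ← cos_neg]
  congr 2 <;> push_cast <;> ring

variable {a₁ a₂ α₁ α₂}

theorem inner_curveXDeriv_self (n : ℕ) (s : ℝ) :
    ⟪curveXDeriv a₁ a₂ α₁ α₂ n s, curveXDeriv a₁ a₂ α₁ α₂ n s⟫ =
      a₁ ^ 2 * α₁ ^ (2 * n) + a₂ ^ 2 * α₂ ^ (2 * n) := by
  simpa using inner_curveXDeriv_add a₁ a₂ α₁ α₂ n 0 s

theorem inner_curveXDeriv_succ (n : ℕ) (s : ℝ) :
    ⟪curveXDeriv a₁ a₂ α₁ α₂ n s, curveXDeriv a₁ a₂ α₁ α₂ (n + 1) s⟫ = 0 := by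
  simpa using inner_curveXDeriv_add a₁ a₂ α₁ α₂ n 1 s

theorem inner_curveXDeriv_succ_left (n : ℕ) (s : ℝ) :
    ⟪curveXDeriv a₁ a₂ α₁ α₂ (n + 1) s, curveXDeriv a₁ a₂ α₁ α₂ n s⟫ = 0 := by
  rw [real_inner_comm, inner_curveXDeriv_succ]

theorem inner_curveXDeriv_add_two (n : ℕ) (s : ℝ) :
    ⟪curveXDeriv a₁ a₂ α₁ α₂ n s, curveXDeriv a₁ a₂ α₁ α₂ (n + 2) s⟫ =
      -(a₁ ^ 2 * α₁ ^ (2 * n + 2) + a₂ ^ 2 * α₂ ^ (2 * n + 2)) := by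
  rw [inner_curveXDeriv_add, show ((2 : ℕ) : ℝ) * (π / 2) = π by push_cast; ring, cos_pi,
    mul_neg_one]

theorem inner_curveXDeriv_add_three (n : ℕ) (s : ℝ) :
    ⟪curveXDeriv a₁ a₂ α₁ α₂ n s, curveXDeriv a₁ a₂ α₁ α₂ (n + 3) s⟫ = 0 := by
  rw [inner_curveXDeriv_add, show ((3 : ℕ) : ℝ) * (π / 2) = π / 2 + π by push_cast; ring,
    cos_add_pi, cos_pi_div_two, neg_zero, mul_zero]

end TorusCurve

section Indicatrix

variable {a₁ a₂ α₁ α₂ : ℝ}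

local notation "X" => curveXDeriv a₁ a₂ α₁ α₂
local notation "w" => oscW (curveX a₁ a₂ α₁ α₂)

theorem oscW_curveX : w = fun s => wedge (X 1 s) (X 2 s) := by
  funext s
  rw [oscW_eq_wedge, curveX_eq_curveXDeriv_zero, deriv_curveXDeriv, deriv_curveXDeriv]

theorem deriv_oscW_curveX : deriv w = fun s => wedge (X 1 s) (X 3 s) := by
  funext s
  have h := (hasDerivAt_curveXDeriv a₁ a₂ α₁ α₂ 1 s).wedge (hasDerivAt_curveXDeriv a₁ a₂ α₁ α₂ 2 s)
  rw [wedge_self, zero_add] at h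
  rw [oscW_curveX, h.deriv]

theorem deriv_deriv_oscW_curveX (s : ℝ) :
    deriv (deriv w) s = wedge (X 2 s) (X 3 s) + wedge (X 1 s) (X 4 s) := by
  rw [deriv_oscW_curveX]
  exact ((hasDerivAt_curveXDeriv a₁ a₂ α₁ α₂ 1 s).wedge
    (hasDerivAt_curveXDeriv a₁ a₂ α₁ α₂ 3 s)).deriv

theorem norm_oscW_curveX (s : ℝ) :
    ‖w s‖ = √(a₁ ^ 2 * α₁ ^ 2 + a₂ ^ 2 * α₂ ^ 2) * √(a₁ ^ 2 * α₁ ^ 4 + a₂ ^ 2 * α₂ ^ 4) := by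
  rw [← Real.sqrt_mul' _ (by positivity), ← Real.sqrt_sq (norm_nonneg _),
    ← real_inner_self_eq_norm_sq, oscW_curveX]
  simp only [inner_wedge_wedge, inner_curveXDeriv_self, inner_curveXDeriv_succ]
  norm_num

theorem inner_deriv_oscW_curveX (s : ℝ) : ⟪deriv w s, deriv (deriv w) s⟫ = 0 := by
  rw [deriv_deriv_oscW_curveX, deriv_oscW_curveX]
  simp only [inner_add_right, inner_wedge_wedge, inner_curveXDeriv_succ,
    inner_curveXDeriv_add_three]
  ring

theorem norm_deriv_oscW_curveX_sq (s : ℝ) :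
    ‖deriv w s‖ ^ 2 = (a₁ * a₂ * α₁ * α₂ * (α₁ ^ 2 - α₂ ^ 2)) ^ 2 := by
  rw [← real_inner_self_eq_norm_sq, deriv_oscW_curveX]
  simp only [inner_wedge_wedge, inner_curveXDeriv_self, inner_curveXDeriv_add_two]
  ring

theorem norm_deriv_deriv_oscW_curveX_sq (s : ℝ) :
    ‖deriv (deriv w) s‖ ^ 2 =
      (a₁ * a₂ * α₁ * α₂ * (α₁ ^ 2 - α₂ ^ 2)) ^ 2 * (α₁ ^ 2 + α₂ ^ 2) := by
  rw [← real_inner_self_eq_norm_sq, deriv_deriv_oscW_curveX]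
  simp only [inner_add_left, inner_add_right, inner_wedge_wedge, inner_curveXDeriv_self,
    inner_curveXDeriv_succ, inner_curveXDeriv_succ_left, inner_curveXDeriv_add_two,
    inner_curveXDeriv_add_three]
  ring

theorem frenetCurvature_oscW_curveX (s : ℝ) :
    frenetCurvature w 1 s = √(α₁ ^ 2 + α₂ ^ 2) / |a₁ * a₂ * α₁ * α₂ * (α₁ ^ 2 - α₂ ^ 2)| := by
  set K := a₁ * a₂ * α₁ * α₂ * (α₁ ^ 2 - α₂ ^ 2)
  have h₁ : ‖deriv w s‖ = |K| := by
    rw [← Real.sqrt_sq_eq_abs, ← norm_deriv_oscW_curveX_sq, Real.sqrt_sq (norm_nonneg _)]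
  have h₂ : ‖deriv (deriv w) s‖ = |K| * √(α₁ ^ 2 + α₂ ^ 2) := by
    rw [← Real.sqrt_sq_eq_abs, ← Real.sqrt_mul (sq_nonneg _), ← norm_deriv_deriv_oscW_curveX_sq,
      Real.sqrt_sq (norm_nonneg _)]
  rw [frenetCurvature_one_of_inner_eq_zero _ _ (inner_deriv_oscW_curveX s), h₁, h₂]
  rcases eq_or_ne K 0 with hK | hK
  · simp [hK]
  · field_simp

end Indicatrix

theorem stmt14_general (a₁ a₂ α₁ α₂ : ℝ) (ha₁ : 0 < a₁) (ha₂ : 0 < a₂)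
    (hα₁ : 0 < α₁) (hα₂ : 0 < α₂) (lam : ℝ)
    (hlam : lam = Real.sqrt (a₁ ^ 2 * α₁ ^ 2 + a₂ ^ 2 * α₂ ^ 2) * Real.sqrt (a₁ ^ 2 * α₁ ^ 4 + a₂ ^ 2 * α₂ ^ 4)) :
    ∀ t : ℝ, frenetCurvature (oscInd (curveX a₁ a₂ α₁ α₂)) 1 t
      = lam * Real.sqrt (α₁ ^ 2 + α₂ ^ 2) / (a₁ * a₂ * α₁ * α₂ * |α₁ ^ 2 - α₂ ^ 2|) := by
  intro t
  have hind : oscInd (curveX a₁ a₂ α₁ α₂) = lam⁻¹ • oscW (curveX a₁ a₂ α₁ α₂) := by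
    funext s
    rw [oscInd, norm_oscW_curveX, ← hlam, Pi.smul_apply]
  have hlam₀ : 0 ≤ lam := hlam ▸ by positivity
  rw [hind, frenetCurvature_one_const_smul, frenetCurvature_oscW_curveX, abs_inv, inv_inv,
    abs_of_nonneg hlam₀, abs_mul, abs_of_pos (by positivity : 0 < a₁ * a₂ * α₁ * α₂), mul_div_assoc]

theorem stmt14 (a₁ a₂ α₁ α₂ : ℝ) (ha₁ : 0 < a₁) (ha₂ : 0 < a₂)
    (hα₁ : 0 < α₁) (hα₂ : 0 < α₂) (hne : α₁ ≠ α₂) (lam : ℝ)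
    (hlam : lam = Real.sqrt (a₁ ^ 2 * α₁ ^ 2 + a₂ ^ 2 * α₂ ^ 2) * Real.sqrt (a₁ ^ 2 * α₁ ^ 4 + a₂ ^ 2 * α₂ ^ 4)) :
    ∀ t : ℝ, frenetCurvature (oscInd (curveX a₁ a₂ α₁ α₂)) 1 t
      = lam * Real.sqrt (α₁ ^ 2 + α₂ ^ 2) / (a₁ * a₂ * α₁ * α₂ * |α₁ ^ 2 - α₂ ^ 2|) :=
  stmt14_general a₁ a₂ α₁ α₂ ha₁ ha₂ hα₁ hα₂ lam hlam
end
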